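/- Let α ≥ 2 and let N_α be as above with smallest positive zero s_α. Then N'_α(x) ≤ 0 and N''_α(x) ≤ 0 for all x in [0, s_α]. -/

import Mathlib

/-! Writing `Nfun α x = ∑ aₙ xⁿ`, the coefficients satisfy `(n + 2)(n + 1) aₙ₊₂ = (n - α) aₙ`, so
`N = Nfun α` is an entire solution of the Hermite equation `N'' = x N' - α N` with `N 0 = 1` and
`N' 0 = 0`. By the intermediate value theorem `N ≥ 0` on `[0, s]`, so there
`(exp (-x²/2) N')' = -α exp (-x²/2) N ≤ 0`: the function `exp (-x²/2) N'` decreases from the value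
`0` it takes at the origin, whence `N' ≤ 0`, and then `N'' = x N' - α N ≤ 0`. -/

/-- The confluent hypergeometric function `₁F₁(-α/2, 1/2, x²/2)` given by its power series. -/
noncomputable def Nfun (α : ℝ) (x : ℝ) : ℝ :=
  ∑' m : ℕ, ((-2 * x ^ 2) ^ m / ((2 * m).factorial : ℝ)) * ∏ j ∈ Finset.range m, (α / 2 - j)

open Set Real Finset Filter

noncomputable section

def powerSeriesSum (a : ℕ → ℝ) (x : ℝ) : ℝ := ∑' n, a n * x ^ n

def derivCoeff (a : ℕ → ℝ) (n : ℕ) : ℝ := (n + 1) * a (n + 1)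

def HasInfiniteRadius (a : ℕ → ℝ) : Prop := ∀ r : ℝ, Summable fun n => |a n| * r ^ n

variable {a : ℕ → ℝ}

lemma HasInfiniteRadius.summable (ha : HasInfiniteRadius a) (x : ℝ) :
    Summable fun n => a n * x ^ n :=
  (ha |x|).of_norm_bounded fun n => by rw [Real.norm_eq_abs, abs_mul, abs_pow]

lemma succ_mul_pow_le (n : ℕ) {r : ℝ} (hr : 0 ≤ r) :
    (n + 1) * r ^ n ≤ (2 * (r + 1)) ^ (n + 1) := by
  have h2 : ((n : ℝ) + 1) ≤ 2 ^ n := by exact_mod_cast Nat.lt_two_pow_self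
  calc (n + 1) * r ^ n ≤ 2 ^ n * (r + 1) ^ n := by gcongr; linarith
    _ = (2 * (r + 1)) ^ n := (mul_pow ..).symm
    _ ≤ (2 * (r + 1)) ^ (n + 1) := pow_le_pow_right₀ (by linarith) n.le_succ

lemma abs_derivCoeff (n : ℕ) : |derivCoeff a n| = (n + 1) * |a (n + 1)| := by
  rw [derivCoeff, abs_mul, abs_of_nonneg (by positivity : (0 : ℝ) ≤ n + 1)]

lemma hasInfiniteRadius_derivCoeff (ha : HasInfiniteRadius a) :
    HasInfiniteRadius (derivCoeff a) := by
  intro r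
  refine ((summable_nat_add_iff 1).mpr (ha (2 * (|r| + 1)))).of_norm_bounded fun n => ?_
  calc ‖|derivCoeff a n| * r ^ n‖ = |a (n + 1)| * ((n + 1) * |r| ^ n) := by
        rw [Real.norm_eq_abs, abs_mul, abs_abs, abs_pow, abs_derivCoeff]
        ring
    _ ≤ |a (n + 1)| * (2 * (|r| + 1)) ^ (n + 1) :=
        mul_le_mul_of_nonneg_left (succ_mul_pow_le n (abs_nonneg r)) (abs_nonneg _)

lemma tsum_mul_pow_eq_derivCoeff (ha : HasInfiniteRadius a) (x : ℝ) :
    ∑' n, a n * (n * x ^ (n - 1)) = powerSeriesSum (derivCoeff a) x := by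
  rw [tsum_eq_zero_add' ?_, powerSeriesSum]
  · simp [derivCoeff, mul_comm, mul_left_comm]
  · simpa [derivCoeff, mul_comm, mul_left_comm] using (hasInfiniteRadius_derivCoeff ha).summable x

lemma hasDerivAt_powerSeriesSum (ha : HasInfiniteRadius a) (x : ℝ) :
    HasDerivAt (powerSeriesSum a) (powerSeriesSum (derivCoeff a) x) x := by
  set R := |x| + 1
  have hx : x ∈ Metric.ball (0 : ℝ) R := by simp [R]
  have hu : Summable fun n => |a n| * (n * R ^ (n - 1)) := by
    refine (summable_nat_add_iff 1).mp ((hasInfiniteRadius_derivCoeff ha R).congr fun n => ?_)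
    rw [abs_derivCoeff, Nat.add_sub_cancel]
    push_cast
    ring
  rw [← tsum_mul_pow_eq_derivCoeff ha]
  refine hasDerivAt_tsum_of_isPreconnected hu Metric.isOpen_ball (convex_ball 0 R).isPreconnected
    (fun n y _ => (hasDerivAt_pow n y).const_mul (a n)) (fun n y hy => ?_) hx (ha.summable x) hx
  have hy : |y| ≤ R := by simpa using (Metric.mem_ball.mp hy).le
  rw [Real.norm_eq_abs, abs_mul, abs_mul, abs_pow, Nat.abs_cast]
  gcongr

lemma deriv_powerSeriesSum (ha : HasInfiniteRadius a) :
    deriv (powerSeriesSum a) = powerSeriesSum (derivCoeff a) :=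
  funext fun x => (hasDerivAt_powerSeriesSum ha x).deriv

lemma continuous_powerSeriesSum (ha : HasInfiniteRadius a) : Continuous (powerSeriesSum a) :=
  continuous_iff_continuousAt.2 fun x => (hasDerivAt_powerSeriesSum ha x).continuousAt

lemma powerSeriesSum_zero : powerSeriesSum a 0 = a 0 := by
  rw [powerSeriesSum, tsum_eq_single 0 fun n hn => by simp [hn]]
  simp

lemma powerSeriesSum_derivCoeff_derivCoeff {α : ℝ} (ha : HasInfiniteRadius a)
    (hrec : ∀ n : ℕ, (n + 2) * (n + 1) * a (n + 2) = (n - α) * a n) (x : ℝ) :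
    powerSeriesSum (derivCoeff (derivCoeff a)) x
      = x * powerSeriesSum (derivCoeff a) x - α * powerSeriesSum a x := by
  have hsum : Summable fun n : ℕ => (n : ℝ) * a n * x ^ n :=
    (summable_nat_add_iff 1).mp <|
      (((hasInfiniteRadius_derivCoeff ha).summable x).mul_left x).congr fun n => by
        simp only [derivCoeff]
        push_cast
        ring
  have hshift : x * powerSeriesSum (derivCoeff a) x = ∑' n : ℕ, n * a n * x ^ n := by
    rw [tsum_eq_zero_add' ((summable_nat_add_iff 1).mpr hsum), powerSeriesSum, ← tsum_mul_left]
    simp only [derivCoeff]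
    push_cast
    ring_nf
  rw [hshift, powerSeriesSum, powerSeriesSum, ← tsum_mul_left,
    ← hsum.tsum_sub ((ha.summable x).mul_left α)]
  congr 1 with n
  simp only [derivCoeff]
  push_cast
  linear_combination x ^ n * hrec n

end

lemma nonneg_of_mem_lowerBounds_pos_zeros {f : ℝ → ℝ} {s x : ℝ} (hf : ContinuousOn f (Icc 0 s))
    (h0 : 0 < f 0) (hs : s ∈ lowerBounds {x | 0 < x ∧ f x = 0}) (hx : x ∈ Icc 0 s) : 0 ≤ f x := by
  by_contra! hneg
  obtain ⟨z, hz, hfz⟩ :=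
    intermediate_value_Icc' hx.1 (hf.mono (Icc_subset_Icc_right hx.2)) ⟨hneg.le, h0.le⟩
  have hz0 : 0 < z := hz.1.lt_of_ne (by rintro rfl; linarith)
  have hzx : z = x := le_antisymm hz.2 (hx.2.trans (hs ⟨hz0, hfz⟩))
  rw [← hzx, hfz] at hneg
  exact hneg.false

lemma hermite_ode_derivs_nonpos {f f' f'' : ℝ → ℝ} {α s x : ℝ} (hα : 0 ≤ α)
    (hf' : ∀ y, HasDerivAt f' (f'' y) y) (hode : ∀ y, f'' y = y * f' y - α * f y)
    (h0 : f' 0 = 0) (hf : ∀ y ∈ Icc 0 s, 0 ≤ f y) (hx : x ∈ Icc 0 s) :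
    f' x ≤ 0 ∧ f'' x ≤ 0 := by
  set g := fun y => exp (-(y ^ 2 / 2)) * f' y
  have hg : ∀ y, HasDerivAt g (-(α * (exp (-(y ^ 2 / 2)) * f y))) y := by
    intro y
    refine ((((hasDerivAt_pow 2 y).div_const 2).neg.exp).mul (hf' y)).congr_deriv ?_
    simp only [hode, Pi.neg_apply]
    push_cast
    ring
  have hanti : AntitoneOn g (Icc 0 s) :=
    antitoneOn_of_hasDerivWithinAt_nonpos (convex_Icc 0 s)
      (continuous_iff_continuousAt.2 fun y => (hg y).continuousAt).continuousOn
      (fun y _ => (hg y).hasDerivWithinAt)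
      (fun y hy => neg_nonpos.2 (mul_nonneg hα (mul_nonneg (exp_pos _).le
        (hf y (interior_subset hy)))))
  have hgx : exp (-(x ^ 2 / 2)) * f' x ≤ exp (-(x ^ 2 / 2)) * 0 := by
    simpa [g, h0] using hanti ⟨le_rfl, hx.1.trans hx.2⟩ hx hx.1
  have hf'x : f' x ≤ 0 := le_of_mul_le_mul_left hgx (exp_pos _)
  refine ⟨hf'x, ?_⟩
  rw [hode]
  nlinarith [mul_nonpos_of_nonneg_of_nonpos hx.1 hf'x, mul_nonneg hα (hf x hx)]

noncomputable def evenHermiteCoeff (α : ℝ) : ℕ → ℝ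
  | 0 => 1
  | 1 => 0
  | n + 2 => (n - α) / ((n + 2) * (n + 1)) * evenHermiteCoeff α n

lemma evenHermiteCoeff_recurrence (α : ℝ) (n : ℕ) :
    (n + 2) * (n + 1) * evenHermiteCoeff α (n + 2) = (n - α) * evenHermiteCoeff α n := by
  rw [evenHermiteCoeff]
  field_simp

lemma evenHermiteCoeff_odd (α : ℝ) (m : ℕ) : evenHermiteCoeff α (2 * m + 1) = 0 := by
  induction m with
  | zero => rfl
  | succ m ih => rw [show 2 * (m + 1) + 1 = 2 * m + 1 + 2 by ring, evenHermiteCoeff, ih, mul_zero]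

lemma evenHermiteCoeff_even (α : ℝ) (m : ℕ) :
    evenHermiteCoeff α (2 * m) = (-2) ^ m / (2 * m).factorial * ∏ j ∈ range m, (α / 2 - j) := by
  induction m with
  | zero => simp [evenHermiteCoeff]
  | succ m ih =>
    rw [show 2 * (m + 1) = 2 * m + 2 by ring, evenHermiteCoeff, ih, prod_range_succ,
      Nat.factorial_succ, Nat.factorial_succ]
    push_cast
    field_simp
    ring

lemma evenHermiteCoeff_ratio_le (α r : ℝ) {m : ℕ} (hm : 2 * r ^ 2 + |α| ≤ m) :
    |evenHermiteCoeff α (2 * m + 2)| * r ^ (2 * m + 2)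
      ≤ 1 / 2 * (|evenHermiteCoeff α (2 * m)| * r ^ (2 * m)) := by
  have hα : |(2 * m : ℝ) - α| ≤ 2 * m + |α| := by
    simpa using abs_sub (2 * m : ℝ) α
  have key : |(2 * m : ℝ) - α| * r ^ 2 ≤ 1 / 2 * ((2 * m + 2) * (2 * m + 1)) := by
    nlinarith [mul_le_mul hα (show r ^ 2 ≤ m / 2 by linarith [abs_nonneg α]) (sq_nonneg r)
      (by positivity), abs_nonneg α]
  have hD : (0 : ℝ) < (2 * m + 2) * (2 * m + 1) := by positivity
  rw [evenHermiteCoeff, abs_mul, abs_div, pow_add]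
  push_cast
  rw [abs_of_pos hD]
  calc |2 * (m : ℝ) - α| / ((2 * m + 2) * (2 * m + 1)) * |evenHermiteCoeff α (2 * m)|
        * (r ^ (2 * m) * r ^ 2)
      = |2 * (m : ℝ) - α| * r ^ 2 / ((2 * m + 2) * (2 * m + 1))
        * (|evenHermiteCoeff α (2 * m)| * r ^ (2 * m)) := by ring
    _ ≤ 1 / 2 * (|evenHermiteCoeff α (2 * m)| * r ^ (2 * m)) :=
      mul_le_mul_of_nonneg_right ((div_le_iff₀ hD).2 key)
        (mul_nonneg (abs_nonneg _) ((even_two_mul m).pow_nonneg r))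

lemma hasInfiniteRadius_evenHermiteCoeff (α : ℝ) : HasInfiniteRadius (evenHermiteCoeff α) := by
  intro r
  refine Summable.even_add_odd ?_ (by simp [evenHermiteCoeff_odd])
  refine summable_of_ratio_norm_eventually_le (by norm_num : (1 / 2 : ℝ) < 1) ?_
  filter_upwards [eventually_ge_atTop ⌈2 * r ^ 2 + |α|⌉₊] with m hm
  have hr : ∀ k, 0 ≤ r ^ (2 * k) := fun k => (even_two_mul k).pow_nonneg r
  rw [Real.norm_eq_abs, Real.norm_eq_abs, abs_of_nonneg (mul_nonneg (abs_nonneg _) (hr _)),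
    abs_of_nonneg (mul_nonneg (abs_nonneg _) (hr _)), mul_add_one]
  exact evenHermiteCoeff_ratio_le α r (Nat.ceil_le.mp hm)

lemma Nfun_eq_powerSeriesSum (α : ℝ) : Nfun α = powerSeriesSum (evenHermiteCoeff α) := by
  ext x
  rw [powerSeriesSum, ← (mul_right_injective₀ two_ne_zero).tsum_eq, Nfun]
  · refine tsum_congr fun m => ?_
    rw [evenHermiteCoeff_even, mul_pow, ← pow_mul]
    ring
  · intro n hn
    obtain ⟨m, rfl | rfl⟩ := Nat.even_or_odd' n
    · exact ⟨m, rfl⟩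
    · simp [evenHermiteCoeff_odd] at hn

theorem stmt18 (α : ℝ) (hα : 2 ≤ α) (s : ℝ)
    (hs : IsLeast {x : ℝ | 0 < x ∧ Nfun α x = 0} s)
    (x : ℝ) (hx : x ∈ Set.Icc 0 s) :
    deriv (Nfun α) x ≤ 0 ∧ deriv (deriv (Nfun α)) x ≤ 0 := by
  have ha := hasInfiniteRadius_evenHermiteCoeff α
  have ha' := hasInfiniteRadius_derivCoeff ha
  rw [Nfun_eq_powerSeriesSum] at hs ⊢
  rw [deriv_powerSeriesSum ha, deriv_powerSeriesSum ha']
  have hnonneg : ∀ y ∈ Icc 0 s, 0 ≤ powerSeriesSum (evenHermiteCoeff α) y := fun y hy =>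
    nonneg_of_mem_lowerBounds_pos_zeros (continuous_powerSeriesSum ha).continuousOn
      (by rw [powerSeriesSum_zero]; exact one_pos) hs.2 hy
  exact hermite_ode_derivs_nonpos (by linarith) (hasDerivAt_powerSeriesSum ha')
    (powerSeriesSum_derivCoeff_derivCoeff ha (evenHermiteCoeff_recurrence α))
    (by simp [powerSeriesSum_zero, derivCoeff, evenHermiteCoeff]) hnonneg hx
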